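/- Let σ > 0. For every ω = (ω₁,ω₂) with −π ≤ ω₁ ≤ π and −π ≤ ω₂ ≤ π, (1/(2πσ²)) · Σ_{k∈ℤ²} exp(−‖k‖²/(2σ²))·cos(⟨ω,k⟩) ≥ exp(−σ²π²), where ‖·‖ is the Euclidean norm on ℝ² and ⟨·,·⟩ the Euclidean inner product. (The left-hand side equals the Fourier series Σ_k a[k]e^{−i⟨ω,k⟩} of the normalized Gaussian filter a[k] = (1/(2πσ²))exp(−‖k‖²/(2σ²)), which is real-valued by symmetry.) -/

import Mathlib

open scoped Real
open Complex

/-! By Poisson summation (Jacobi's theta transformation), the one-dimensional Gaussian symbol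
`∑ₖ e^{-k²/(2σ²)} e^{iωk}` equals `σ√(2π) ∑ₙ e^{-2π²σ²(n - ω/(2π))²}`, a sum of positive terms
whose `n = 0` term is `e^{-σ²ω²/2}`. The two-dimensional symbol is the product of two such
sums, so it is at least `2πσ² e^{-σ²(ω₁² + ω₂²)/2} ≥ 2πσ² e^{-σ²π²}` on `[-π, π]²`. -/

noncomputable def periodizedGaussian (b c : ℝ) : ℝ :=
  ∑' n : ℤ, Real.exp (-b * ((n : ℝ) - c) ^ 2)

lemma summable_exp_neg_mul_int_sub_sq {b : ℝ} (hb : 0 < b) (c : ℝ) :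
    Summable fun n : ℤ ↦ Real.exp (-b * ((n : ℝ) - c) ^ 2) := by
  -- `e^{-b(n-c)²} = e^{-bc²} ‖θ-term‖` for `z = -i bc/π`, `τ = i b/π`
  have hθ := ((summable_jacobiTheta₂_term_iff ((-(b * c / π) : ℝ) * I) ((b / π : ℝ) * I)).2
    (by simpa using div_pos hb Real.pi_pos)).norm.mul_left (Real.exp (-b * c ^ 2))
  refine hθ.congr fun n ↦ ?_
  rw [norm_jacobiTheta₂_term, ← Real.exp_add]
  congr 1
  simp only [mul_I_im, ofReal_re]
  field_simp
  ring

lemma exp_neg_mul_sq_le_periodizedGaussian {b : ℝ} (hb : 0 < b) (c : ℝ) :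
    Real.exp (-b * c ^ 2) ≤ periodizedGaussian b c := by
  have h₀ := (summable_exp_neg_mul_int_sub_sq hb c).le_tsum 0 fun n _ ↦ (Real.exp_pos _).le
  simpa [periodizedGaussian] using h₀

noncomputable def gaussianWave (σ ω : ℝ) (k : ℤ) : ℂ :=
  cexp ((-(k : ℝ) ^ 2 / (2 * σ ^ 2) : ℝ) + (ω * k : ℝ) * I)

lemma norm_gaussianWave (σ ω : ℝ) (k : ℤ) :
    ‖gaussianWave σ ω k‖ = Real.exp (-(k : ℝ) ^ 2 / (2 * σ ^ 2)) := by
  rw [gaussianWave, norm_exp, add_re, mul_I_re, ofReal_re, ofReal_im, neg_zero, add_zero]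

lemma summable_norm_gaussianWave {σ : ℝ} (hσ : 0 < σ) (ω : ℝ) :
    Summable fun k : ℤ ↦ ‖gaussianWave σ ω k‖ := by
  refine (summable_exp_neg_mul_int_sub_sq (b := 1 / (2 * σ ^ 2)) (by positivity) 0).congr
    fun k ↦ ?_
  rw [norm_gaussianWave]
  congr 1
  field_simp
  ring

theorem tsum_gaussianWave {σ : ℝ} (hσ : 0 < σ) (ω : ℝ) :
    ∑' k : ℤ, gaussianWave σ ω k =
      ((σ * √(2 * π) * periodizedGaussian (2 * π ^ 2 * σ ^ 2) (ω / (2 * π)) : ℝ) : ℂ) := by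
  set a : ℝ := 1 / (2 * π * σ ^ 2) with ha
  have hquad (k : ℤ) : -π * (a : ℂ) * (k : ℂ) ^ 2 + 2 * π * (I * ω / (2 * π)) * k =
      ((-(k : ℝ) ^ 2 / (2 * σ ^ 2) : ℝ) : ℂ) + ((ω * k : ℝ) : ℂ) * I := by
    rw [ha]; push_cast; field_simp
  have hdual (n : ℤ) : cexp (-π / (a : ℂ) * (n + I * (I * ω / (2 * π))) ^ 2) =
      (Real.exp (-(2 * π ^ 2 * σ ^ 2) * ((n : ℝ) - ω / (2 * π)) ^ 2) : ℂ) := by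
    have hI : I * (I * ω / (2 * π)) = -(ω / (2 * π)) := by linear_combination (ω / (2 * π)) * I_sq
    rw [ofReal_exp, ha, hI]
    congr 1
    push_cast
    field_simp
    ring
  have hscale : (1 : ℂ) / (a : ℂ) ^ (1 / 2 : ℂ) = ((σ * √(2 * π) : ℝ) : ℂ) := by
    have hsqrt : a ^ (1 / 2 : ℝ) = (σ * √(2 * π))⁻¹ := by
      rw [← Real.sqrt_eq_rpow, ha, one_div, Real.sqrt_inv, Real.sqrt_mul (by positivity),
        Real.sqrt_sq hσ.le, mul_comm]
    rw [show (1 / 2 : ℂ) = ((1 / 2 : ℝ) : ℂ) by norm_num,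
      ← ofReal_cpow (by positivity), hsqrt, ofReal_inv, one_div, inv_inv]
  calc ∑' k : ℤ, gaussianWave σ ω k
      = ∑' k : ℤ, cexp (-π * (a : ℂ) * (k : ℂ) ^ 2 + 2 * π * (I * ω / (2 * π)) * k) :=
        tsum_congr fun k ↦ by rw [gaussianWave, hquad]
    _ = 1 / (a : ℂ) ^ (1 / 2 : ℂ) *
          ∑' n : ℤ, cexp (-π / (a : ℂ) * (n + I * (I * ω / (2 * π))) ^ 2) :=
        tsum_exp_neg_quadratic (by rw [ofReal_re, ha]; positivity) _
    _ = _ := by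
        rw [hscale, tsum_congr hdual, ← ofReal_tsum, ← ofReal_mul, periodizedGaussian]

lemma re_gaussianWave_mul_gaussianWave (σ ω₁ ω₂ : ℝ) (k : ℤ × ℤ) :
    (gaussianWave σ ω₁ k.1 * gaussianWave σ ω₂ k.2).re =
      Real.exp (-((k.1 : ℝ) ^ 2 + (k.2 : ℝ) ^ 2) / (2 * σ ^ 2)) *
        Real.cos (ω₁ * k.1 + ω₂ * k.2) := by
  rw [gaussianWave, gaussianWave, ← Complex.exp_add, exp_re]
  simp only [add_re, add_im, ofReal_re, ofReal_im, mul_I_re, mul_I_im, neg_zero, add_zero,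
    zero_add]
  congr 2
  ring

theorem tsum_exp_mul_cos_eq_mul_periodizedGaussian {σ : ℝ} (hσ : 0 < σ) (ω₁ ω₂ : ℝ) :
    ∑' k : ℤ × ℤ, Real.exp (-((k.1 : ℝ) ^ 2 + (k.2 : ℝ) ^ 2) / (2 * σ ^ 2)) *
        Real.cos (ω₁ * k.1 + ω₂ * k.2) =
      2 * π * σ ^ 2 * (periodizedGaussian (2 * π ^ 2 * σ ^ 2) (ω₁ / (2 * π)) *
        periodizedGaussian (2 * π ^ 2 * σ ^ 2) (ω₂ / (2 * π))) := by
  have h₁ := summable_norm_gaussianWave hσ ω₁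
  have h₂ := summable_norm_gaussianWave hσ ω₂
  have hsqrt : √(2 * π) * √(2 * π) = 2 * π := Real.mul_self_sqrt (by positivity)
  calc _ = ∑' k : ℤ × ℤ, (gaussianWave σ ω₁ k.1 * gaussianWave σ ω₂ k.2).re :=
        tsum_congr fun k ↦ (re_gaussianWave_mul_gaussianWave σ ω₁ ω₂ k).symm
    _ = ((∑' k : ℤ, gaussianWave σ ω₁ k) * ∑' k : ℤ, gaussianWave σ ω₂ k).re := by
        rw [← re_tsum (summable_mul_of_summable_norm h₁ h₂), tsum_mul_tsum_of_summable_norm h₁ h₂]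
    _ = _ := by
        rw [tsum_gaussianWave hσ, tsum_gaussianWave hσ, ← ofReal_mul, ofReal_re]
        linear_combination (σ ^ 2 * periodizedGaussian (2 * π ^ 2 * σ ^ 2) (ω₁ / (2 * π)) *
          periodizedGaussian (2 * π ^ 2 * σ ^ 2) (ω₂ / (2 * π))) * hsqrt

/-- uniform lower bound on the Fourier symbol of the normalized
two-dimensional discrete Gaussian filter: for ω ∈ [−π,π]²,
(1/(2πσ²))·Σ_{k∈ℤ²} e^{−‖k‖²/(2σ²)}cos⟨ω,k⟩ ≥ e^{−σ²π²}. -/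
theorem stmt14 (σ : ℝ) (hσ : 0 < σ) (ω : ℝ × ℝ)
    (hω1 : ω.1 ∈ Set.Icc (-π) π) (hω2 : ω.2 ∈ Set.Icc (-π) π) :
    Real.exp (-(σ ^ 2 * π ^ 2)) ≤
      (1 / (2 * π * σ ^ 2)) *
        ∑' k : ℤ × ℤ,
          Real.exp (-(((k.1 : ℝ) ^ 2 + (k.2 : ℝ) ^ 2)) / (2 * σ ^ 2)) *
            Real.cos (ω.1 * (k.1 : ℝ) + ω.2 * (k.2 : ℝ)) := by
  set b := 2 * π ^ 2 * σ ^ 2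
  have hb : 0 < b := by positivity
  have hsq₁ : ω.1 ^ 2 ≤ π ^ 2 := sq_le_sq' hω1.1 hω1.2
  have hsq₂ : ω.2 ^ 2 ≤ π ^ 2 := sq_le_sq' hω2.1 hω2.2
  rw [tsum_exp_mul_cos_eq_mul_periodizedGaussian hσ, ← mul_assoc,
    one_div_mul_cancel (by positivity), one_mul]
  calc Real.exp (-(σ ^ 2 * π ^ 2))
      ≤ Real.exp (-b * (ω.1 / (2 * π)) ^ 2) * Real.exp (-b * (ω.2 / (2 * π)) ^ 2) := by
        rw [← Real.exp_add, Real.exp_le_exp]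
        field_simp
        nlinarith [sq_nonneg σ]
    _ ≤ _ := mul_le_mul (exp_neg_mul_sq_le_periodizedGaussian hb _)
        (exp_neg_mul_sq_le_periodizedGaussian hb _) (Real.exp_pos _).le
        ((Real.exp_pos _).le.trans (exp_neg_mul_sq_le_periodizedGaussian hb _))
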